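/- Let W be a symmetric zero-diagonal N×N matrix and N = m+n with m, n ≥ 2. Under the permutation null, E[U_diff] = (m(m−1) − n(n−1))/(N(N−1)) · W_1 and Var(U_diff) = (4mn/(N(N−1))) · W̃_3, where U_diff = U_x − U_y, W_1 = Σ_{i,j} W_{ij}, and W̃_3 = Σ_{i,j,r} W_{ij}W_{ir} − W_1²/N. -/

import Mathlib

/-!
With `s x = ±1` according to the group of label `x`, the pair `(i, j)` contributes
`W i j * (s (π i) + s (π j)) / 2` to `U_x - U_y`, so for symmetric `W` the difference is the linear
permutation statistic `T π = ∑ i, r i * s (π i)` with row sums `r i = ∑ j, W i j`.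
Under a uniform permutation, `π i` is uniform on the labels and, for `i ≠ j`, `(π i, π j)` is
uniform on ordered pairs of distinct labels (2-transitivity). This gives the classical moments
`E T = (∑ r) (∑ s) / N` and `Var T = (∑ r² - (∑ r)² / N) (∑ s² - (∑ s)² / N) / (N - 1)`,
and `∑ s = m - n`, `∑ s² = N` turn them into the stated formulas.
-/

open Finset

/-- Expectation under the uniform distribution on permutations of `Fin N`. -/
noncomputable def pE {N : ℕ} (f : Equiv.Perm (Fin N) → ℝ) : ℝ :=
  (∑ π : Equiv.Perm (Fin N), f π) / (Fintype.card (Equiv.Perm (Fin N)) : ℝ)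

/-- Covariance under the uniform distribution on permutations of `Fin N`. -/
noncomputable def pCov {N : ℕ} (f g : Equiv.Perm (Fin N) → ℝ) : ℝ :=
  pE (fun π => (f π - pE f) * (g π - pE g))

/-- Within-first-group sum: sums `W i j` over pairs both assigned to the first `m` labels. -/
noncomputable def Ux {N : ℕ} (W : Matrix (Fin N) (Fin N) ℝ) (m : ℕ)
    (π : Equiv.Perm (Fin N)) : ℝ :=
  ∑ i, ∑ j, if (π i : ℕ) < m ∧ (π j : ℕ) < m then W i j else 0

/-- Within-second-group sum: sums `W i j` over pairs both assigned to labels `> m`. -/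
noncomputable def Uy {N : ℕ} (W : Matrix (Fin N) (Fin N) ℝ) (m : ℕ)
    (π : Equiv.Perm (Fin N)) : ℝ :=
  ∑ i, ∑ j, if m ≤ (π i : ℕ) ∧ m ≤ (π j : ℕ) then W i j else 0

open Equiv

section PermSums

variable {α M : Type*} [Fintype α] [DecidableEq α] [AddCommMonoid M]

theorem card_nsmul_sum_perm_apply (g : α → M) (i : α) :
    Fintype.card α • ∑ π : Perm α, g (π i) = Fintype.card (Perm α) • ∑ x, g x := by
  have hinv : ∀ j, ∑ π : Perm α, g (π j) = ∑ π : Perm α, g (π i) := fun j =>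
    Fintype.sum_equiv (Equiv.mulRight (swap i j)) _ _ fun π => by simp [Perm.mul_apply]
  calc Fintype.card α • ∑ π : Perm α, g (π i) = ∑ j, ∑ π : Perm α, g (π j) := by
        simp [hinv]
    _ = ∑ π : Perm α, ∑ j, g (π j) := sum_comm
    _ = Fintype.card (Perm α) • ∑ x, g x := by simp [Equiv.sum_comp]

theorem card_offDiag_nsmul_sum_perm_apply_apply (g : α → α → M) {i j : α} (hij : i ≠ j) :
    #(univ : Finset α).offDiag • ∑ π : Perm α, g (π i) (π j) =
      Fintype.card (Perm α) • ∑ p ∈ (univ : Finset α).offDiag, g p.1 p.2 := by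
  have hinv : ∀ p ∈ (univ : Finset α).offDiag,
      ∑ π : Perm α, g (π p.1) (π p.2) = ∑ π : Perm α, g (π i) (π j) := by
    intro p hp
    obtain ⟨σ, hσi, hσj⟩ := MulAction.is_two_pretransitive_iff.mp
      (Perm.isMultiplyPretransitive α 2) hij (mem_offDiag.mp hp).2.2
    rw [Perm.smul_def] at hσi hσj
    exact Fintype.sum_equiv (Equiv.mulRight σ) _ _ fun π => by simp [Perm.mul_apply, hσi, hσj]
  have hperm : ∀ π : Perm α, ∑ p ∈ (univ : Finset α).offDiag, g (π p.1) (π p.2) =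
      ∑ p ∈ (univ : Finset α).offDiag, g p.1 p.2 := fun π =>
    sum_nbij' (fun p => (π p.1, π p.2)) (fun p => (π⁻¹ p.1, π⁻¹ p.2))
      (by simp) (by simp) (by simp) (by simp) (fun _ _ => rfl)
  calc #(univ : Finset α).offDiag • ∑ π : Perm α, g (π i) (π j)
      = ∑ p ∈ (univ : Finset α).offDiag, ∑ π : Perm α, g (π p.1) (π p.2) := by
        rw [sum_congr rfl hinv, sum_const]
    _ = ∑ π : Perm α, ∑ p ∈ (univ : Finset α).offDiag, g (π p.1) (π p.2) := sum_comm
    _ = Fintype.card (Perm α) • ∑ p ∈ (univ : Finset α).offDiag, g p.1 p.2 := by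
        simp [hperm]

end PermSums

section SumIdentities

variable {ι R : Type*} [Fintype ι] [DecidableEq ι] [CommRing R]

theorem sum_offDiag_mul (c : ι → R) :
    ∑ p ∈ (univ : Finset ι).offDiag, c p.1 * c p.2 = (∑ x, c x) ^ 2 - ∑ x, c x ^ 2 := by
  have h := sum_product univ univ fun p : ι × ι => c p.1 * c p.2
  rw [← sum_mul_sum, ← diag_union_offDiag, sum_union (disjoint_diag_offDiag _), sum_diag] at h
  rw [sq, ← h]
  simp [sq]

theorem sum_sum_mul_mul_ite_eq (a : ι → R) (A B : R) :
    ∑ i, ∑ j, a i * a j * (if i = j then A else B) =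
      A * ∑ i, a i ^ 2 + B * ((∑ i, a i) ^ 2 - ∑ i, a i ^ 2) := by
  have hsplit : ∀ i j, a i * a j * (if i = j then A else B) =
      B * (a i * a j) + if i = j then (A - B) * a i ^ 2 else 0 := by
    intro i j
    split_ifs with h
    · subst h; ring
    · ring
  simp only [hsplit, sum_add_distrib, ← mul_sum, sum_ite_eq, mem_univ, if_true]
  rw [← sum_mul, ← sq]
  ring

end SumIdentities

section UniformPerm

variable {N : ℕ}

theorem card_perm_fin_ne_zero : (Fintype.card (Perm (Fin N)) : ℝ) ≠ 0 :=
  Nat.cast_ne_zero.mpr Fintype.card_ne_zero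

theorem pE_sum {ι : Type*} (s : Finset ι) (f : ι → Perm (Fin N) → ℝ) :
    pE (fun π => ∑ i ∈ s, f i π) = ∑ i ∈ s, pE (f i) := by
  simp only [pE, sum_comm (s := s), sum_div]

theorem pE_const_mul (c : ℝ) (f : Perm (Fin N) → ℝ) :
    pE (fun π => c * f π) = c * pE f := by
  simp only [pE, ← mul_sum, mul_div_assoc]

theorem pCov_eq_pE_mul_sub (f g : Perm (Fin N) → ℝ) :
    pCov f g = pE (fun π => f π * g π) - pE f * pE g := by
  have hC := card_perm_fin_ne_zero (N := N)
  simp only [pCov, pE, sub_mul, mul_sub, sum_sub_distrib, ← sum_mul, ← mul_sum, sum_const,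
    card_univ, nsmul_eq_mul]
  field_simp
  ring

theorem pE_apply (g : Fin N → ℝ) (i : Fin N) : pE (fun π => g (π i)) = (∑ x, g x) / N := by
  have h := card_nsmul_sum_perm_apply g i
  rw [nsmul_eq_mul, nsmul_eq_mul, Fintype.card_fin] at h
  have hN : (N : ℝ) ≠ 0 := Nat.cast_ne_zero.mpr (Fin.pos i).ne'
  rw [pE, div_eq_div_iff card_perm_fin_ne_zero hN, mul_comm, h, mul_comm]

theorem pE_apply_mul_apply (d : Fin N → ℝ) {i j : Fin N} (hij : i ≠ j) :
    pE (fun π => d (π i) * d (π j)) = ((∑ x, d x) ^ 2 - ∑ x, d x ^ 2) / (N * (N - 1)) := by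
  have h := card_offDiag_nsmul_sum_perm_apply_apply (fun x y => d x * d y) hij
  have hK : #(univ : Finset (Fin N)).offDiag ≠ 0 :=
    card_ne_zero_of_mem (a := (i, j)) (mem_offDiag.mpr ⟨mem_univ i, mem_univ j, hij⟩)
  have hKN : (#(univ : Finset (Fin N)).offDiag : ℝ) = N * (N - 1) := by
    rw [offDiag_card, card_univ, Fintype.card_fin, Nat.cast_sub (Nat.le_mul_self N)]
    push_cast
    ring
  rw [nsmul_eq_mul, nsmul_eq_mul, sum_offDiag_mul, hKN] at h
  rw [pE, div_eq_div_iff card_perm_fin_ne_zero (hKN ▸ Nat.cast_ne_zero.mpr hK), mul_comm, h,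
    mul_comm]

end UniformPerm

section LinearPermStatistic

variable {N : ℕ} (a d : Fin N → ℝ)

theorem pE_sum_mul_apply :
    pE (fun π => ∑ i, a i * d (π i)) = (∑ i, a i) * (∑ x, d x) / N := by
  simp only [pE_sum, pE_const_mul, pE_apply, ← sum_mul, mul_div_assoc]

theorem pE_apply_mul_apply_eq_ite (i j : Fin N) :
    pE (fun π => d (π i) * d (π j)) =
      if i = j then (∑ x, d x ^ 2) / N else ((∑ x, d x) ^ 2 - ∑ x, d x ^ 2) / (N * (N - 1)) := by
  split_ifs with hij
  · subst hij
    simpa only [sq] using pE_apply (fun x => d x * d x) i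
  · exact pE_apply_mul_apply d hij

theorem pE_sum_mul_apply_sq :
    pE (fun π => (∑ i, a i * d (π i)) ^ 2) =
      (∑ x, d x ^ 2) / N * ∑ i, a i ^ 2 +
        ((∑ x, d x) ^ 2 - ∑ x, d x ^ 2) / (N * (N - 1)) * ((∑ i, a i) ^ 2 - ∑ i, a i ^ 2) := by
  have hexpand : ∀ π : Perm (Fin N),
      (∑ i, a i * d (π i)) ^ 2 = ∑ i, ∑ j, a i * a j * (d (π i) * d (π j)) := fun π => by
    simp only [sq, sum_mul_sum]
    exact sum_congr rfl fun i _ => sum_congr rfl fun j _ => by ring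
  simp only [hexpand, pE_sum, pE_const_mul, pE_apply_mul_apply_eq_ite, sum_sum_mul_mul_ite_eq]

theorem pCov_sum_mul_apply (hN : 2 ≤ N) :
    pCov (fun π => ∑ i, a i * d (π i)) (fun π => ∑ i, a i * d (π i)) =
      (∑ i, a i ^ 2 - (∑ i, a i) ^ 2 / N) * (∑ x, d x ^ 2 - (∑ x, d x) ^ 2 / N) / (N - 1) := by
  have hN0 : (N : ℝ) ≠ 0 := by positivity
  have hN1 : (N : ℝ) - 1 ≠ 0 := by
    have : (2 : ℝ) ≤ N := by exact_mod_cast hN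
    linarith
  rw [pCov_eq_pE_mul_sub]
  simp only [← sq, pE_sum_mul_apply_sq, pE_sum_mul_apply]
  field_simp
  ring

end LinearPermStatistic

def groupSign (m : ℕ) {N : ℕ} (x : Fin N) : ℝ :=
  if (x : ℕ) < m then 1 else -1

theorem sum_groupSign_add (m n : ℕ) : ∑ x : Fin (m + n), groupSign m x = m - n := by
  simp only [groupSign]
  rw [Fin.sum_univ_eq_sum_range (fun k => if k < m then (1 : ℝ) else -1), sum_range_add,
    sum_congr rfl fun k hk => if_pos (mem_range.mp hk)]
  simp [sub_eq_add_neg]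

theorem sum_groupSign_sq (m : ℕ) {N : ℕ} : ∑ x : Fin N, groupSign m x ^ 2 = N := by
  simp [groupSign, apply_ite (· ^ 2 : ℝ → ℝ)]

theorem Ux_sub_Uy_eq {N m : ℕ} (W : Matrix (Fin N) (Fin N) ℝ) (hsym : W.IsSymm)
    (π : Perm (Fin N)) :
    Ux W m π - Uy W m π = ∑ i, (∑ j, W i j) * groupSign m (π i) := by
  have hpair : ∀ i j,
      ((if (π i : ℕ) < m ∧ (π j : ℕ) < m then W i j else 0) -
        if m ≤ (π i : ℕ) ∧ m ≤ (π j : ℕ) then W i j else 0) =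
      (W i j * groupSign m (π i) + W j i * groupSign m (π j)) / 2 := by
    intro i j
    rw [hsym.apply i j]
    unfold groupSign
    split_ifs <;> first | omega | ring
  calc Ux W m π - Uy W m π
      = (∑ i, ∑ j, W i j * groupSign m (π i) + ∑ i, ∑ j, W j i * groupSign m (π j)) / 2 := by
        simp only [Ux, Uy, ← sum_sub_distrib, hpair, ← sum_div, sum_add_distrib]
    _ = ∑ i, (∑ j, W i j) * groupSign m (π i) := by
        rw [sum_comm (f := fun i j => W j i * groupSign m (π j))]
        simp only [← sum_mul]
        ring

theorem stmt_15_general (m n N : ℕ) (hm : 2 ≤ m) (hN : N = m + n)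
    (W : Matrix (Fin N) (Fin N) ℝ) (hsym : W.IsSymm) :
    pE (fun π => Ux W m π - Uy W m π) =
        ((m : ℝ) * ((m : ℝ) - 1) - (n : ℝ) * ((n : ℝ) - 1)) / ((N : ℝ) * ((N : ℝ) - 1))
          * (∑ i, ∑ j, W i j)
    ∧ pCov (fun π => Ux W m π - Uy W m π) (fun π => Ux W m π - Uy W m π) =
        (4 * (m : ℝ) * (n : ℝ) / ((N : ℝ) * ((N : ℝ) - 1))) *
          ((∑ i, ∑ j, ∑ r, W i j * W i r)
            - (∑ i, ∑ j, W i j) ^ 2 / (N : ℝ)) := by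
  subst hN
  have hU : (fun π => Ux W m π - Uy W m π) =
      fun π => ∑ i, (∑ j, W i j) * groupSign m (π i) := funext (Ux_sub_Uy_eq W hsym)
  have hrow : ∑ i, ∑ j, ∑ r, W i j * W i r = ∑ i, (∑ j, W i j) ^ 2 := by
    simp only [sq, sum_mul_sum]
  have hmn : (m : ℝ) + n - 1 ≠ 0 := by
    have : (2 : ℝ) ≤ m := by exact_mod_cast hm
    have : (0 : ℝ) ≤ n := n.cast_nonneg
    exact ne_of_gt (by linarith)
  rw [hU, pE_sum_mul_apply, pCov_sum_mul_apply _ _ (by omega), sum_groupSign_add,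
    sum_groupSign_sq, hrow]
  push_cast
  constructor <;> field_simp <;> ring

theorem stmt_15 (m n N : ℕ) (hm : 2 ≤ m) (hn : 2 ≤ n) (hN : N = m + n)
    (W : Matrix (Fin N) (Fin N) ℝ) (hsym : W.IsSymm) (hdiag : ∀ i, W i i = 0) :
    pE (fun π => Ux W m π - Uy W m π) =
        ((m : ℝ) * ((m : ℝ) - 1) - (n : ℝ) * ((n : ℝ) - 1)) / ((N : ℝ) * ((N : ℝ) - 1))
          * (∑ i, ∑ j, W i j)
    ∧ pCov (fun π => Ux W m π - Uy W m π) (fun π => Ux W m π - Uy W m π) =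
        (4 * (m : ℝ) * (n : ℝ) / ((N : ℝ) * ((N : ℝ) - 1))) *
          ((∑ i, ∑ j, ∑ r, W i j * W i r)
            - (∑ i, ∑ j, W i j) ^ 2 / (N : ℝ)) :=
  stmt_15_general m n N hm hN W hsym
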